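/- arXiv:2110.06701 — 4 statements merged into one kernel-verified Lean document; each statement's English description precedes it below -/
import Mathlib

section
/- Let $M^n = N_T \times_f N_\perp$ be a contact CR-warped product submanifold of a Sasakian manifold $\tilde M^{2l+1}$ with $\xi$ tangent to $N_T$. Then for every $X$ tangent to $N_T$ and every section $\zeta$ of the maximal $\phi$-invariant subbundle $\nu$ of the normal bundle, the second fundamental form satisfies $g(h(X,X),\zeta) = -\,g(h(\phi X, \phi X), \zeta)$. -/
/-!
STATEMENT 3.  Formalization of: for a contact CR-warped product submanifold
`Mⁿ = N_T ×_f N_⊥` of a Sasakian manifold `M̃^{2l+1}` with `ξ` tangent to `N_T`, the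
second fundamental form satisfies `g(h(X,X), ζ) = -g(h(φX, φX), ζ)` for every `X`
tangent to `N_T` and every section `ζ` of the maximal `φ`-invariant subbundle `ν` of
the normal bundle `T^⊥Mⁿ = F𝒟_⊥ ⊕ ν`.

The setting is encoded algebraically exactly as in the other contact statements:
`V` is the module of ambient vector fields along `Mⁿ` with Riemannian metric `g`,
`T ⊆ V` the tangent distribution of the contact CR-submanifold `Mⁿ`, with
`T = 𝒟_T ⊕ 𝒟_⊥ ⊕ ⟨ξ⟩`, `𝒟_T` invariant, `𝒟_⊥` anti-invariant, the summands mutually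
orthogonal; `N_T` is the integral manifold of `𝒟_T ⊕ ⟨ξ⟩` and `N_⊥` of `𝒟_⊥`;
`D`, `nab`, `h` are the ambient connection, the induced connection and the second
fundamental form (Gauss formula), `Dphi X Y = (∇̃_X φ)Y`, and the Sasakian condition
holds.  `ν` is a `φ`-invariant subbundle of the normal bundle.
-/
theorem statement3
    (V : Type*) [AddCommGroup V] [Module ℝ V]
    (g : V →ₗ[ℝ] V →ₗ[ℝ] ℝ)
    (gsymm : ∀ u v, g u v = g v u)
    (gpos : ∀ v, v ≠ 0 → 0 < g v v)
    (T : Submodule ℝ V)                 -- tangent distribution of Mⁿ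
    (φ : V →ₗ[ℝ] V) (ξ : V)
    (hξT : ξ ∈ T)
    -- almost contact metric structure
    (acs1 : ∀ X, φ (φ X) = -X + (g X ξ) • ξ)
    (acs2 : φ ξ = 0)
    (acs3 : ∀ X, g (φ X) ξ = 0)
    (acs4 : g ξ ξ = 1)
    (acs5 : ∀ X Y, g (φ X) (φ Y) = g X Y - g X ξ * g Y ξ)
    -- contact CR-structure:  T Mⁿ = 𝒟_T ⊕ 𝒟_⊥ ⊕ ⟨ξ⟩
    (DT Dperp : Submodule ℝ V)
    (hdecomp : DT ⊔ Dperp ⊔ Submodule.span ℝ ({ξ} : Set V) = T)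
    (hDTinv : ∀ X ∈ DT, φ X ∈ DT)                    -- 𝒟_T is invariant
    (hDperpanti : ∀ Z ∈ Dperp, ∀ U ∈ T, g (φ Z) U = 0) -- 𝒟_⊥ is anti-invariant
    (horth1 : ∀ X ∈ DT, ∀ Z ∈ Dperp, g X Z = 0)
    (horth2 : ∀ X ∈ DT, g X ξ = 0)
    (horth3 : ∀ Z ∈ Dperp, g Z ξ = 0)
    -- Gauss formula
    (D : V → V → V) (nab : V → V → V) (h : V → V → V)
    (gauss : ∀ X ∈ T, ∀ Y ∈ T, D X Y = nab X Y + h X Y)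
    (nab_tan : ∀ X ∈ T, ∀ Y ∈ T, nab X Y ∈ T)
    (h_normal : ∀ X ∈ T, ∀ Y ∈ T, ∀ Z ∈ T, g (h X Y) Z = 0)
    (hsymm : ∀ X ∈ T, ∀ Y ∈ T, h X Y = h Y X)
    -- covariant derivative of φ and the Sasakian condition
    (Dphi : V → V → V)
    (leibniz : ∀ X Y, Dphi X Y = D X (φ Y) - φ (D X Y))
    (sasakian : ∀ X Y, Dphi X Y = -(g X Y) • ξ + (g Y ξ) • X)
    -- ν : the maximal φ-invariant subbundle of the normal bundle
    (ν : Submodule ℝ V)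
    (hν_normal : ∀ ζ ∈ ν, ∀ U ∈ T, g ζ U = 0)
    (hν_inv : ∀ ζ ∈ ν, φ ζ ∈ ν) :
    ∀ X ∈ DT ⊔ Submodule.span ℝ ({ξ} : Set V), ∀ ζ ∈ ν,
      g (h X X) ζ = - g (h (φ X) (φ X)) ζ := by

  intro X hX ζ hζ
  -- basic facts
  have hDTT : DT ≤ T := by
    rw [← hdecomp]; exact le_sup_of_le_left le_sup_left
  have hXT : X ∈ T := by
    have hle : DT ⊔ Submodule.span ℝ ({ξ} : Set V) ≤ T := by
      rw [← hdecomp]; exact sup_le_sup_right le_sup_left _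
    exact hle hX
  have hφX_DT : φ X ∈ DT := by
    rcases Submodule.mem_sup.mp hX with ⟨a, ha, b, hb, rfl⟩
    rcases Submodule.mem_span_singleton.mp hb with ⟨c, rfl⟩
    have : φ (a + c • ξ) = φ a := by
      simp [map_add, map_smul, acs2]
    rw [this]; exact hDTinv a ha
  have hφXT : φ X ∈ T := hDTT hφX_DT
  -- skew symmetry of φ
  have skew : ∀ u v, g (φ u) v = - g u (φ v) := by
    intro u v
    have h1 := acs5 u (φ v)
    rw [acs1, acs3] at h1
    simp only [map_add, map_neg, map_smul, smul_eq_mul, LinearMap.add_apply,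
      LinearMap.neg_apply, LinearMap.smul_apply, acs3] at h1
    linarith
  have gζξ : g ζ ξ = 0 := hν_normal ζ hζ ξ hξT
  -- the key identity
  have star : ∀ Xa ∈ T, ∀ Y ∈ T, φ Y ∈ T → ∀ ζ' ∈ ν,
      g (h Xa (φ Y)) ζ' = - g (h Xa Y) (φ ζ') := by
    intro Xa hXa Y hY hφY ζ' hζ'
    have hφζ' : φ ζ' ∈ ν := hν_inv ζ' hζ'
    have e1 : g (h Xa (φ Y)) ζ' = g (D Xa (φ Y)) ζ' := by
      have := gauss Xa hXa (φ Y) hφY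
      have hnab : g (nab Xa (φ Y)) ζ' = 0 := by
        rw [gsymm]; exact hν_normal ζ' hζ' _ (nab_tan Xa hXa (φ Y) hφY)
      rw [this]
      simp only [map_add, LinearMap.add_apply, hnab, zero_add]
    have e2 : D Xa (φ Y) = Dphi Xa Y + φ (D Xa Y) := by
      rw [leibniz]; abel
    have e3 : g (Dphi Xa Y) ζ' = 0 := by
      rw [sasakian]
      simp only [map_add, map_neg, map_smul, smul_eq_mul, LinearMap.add_apply,
        LinearMap.neg_apply, LinearMap.smul_apply]
      rw [gsymm ξ ζ', gsymm Xa ζ', hν_normal ζ' hζ' ξ hξT, hν_normal ζ' hζ' Xa hXa]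
      ring
    have e4 : g (φ (D Xa Y)) ζ' = - g (D Xa Y) (φ ζ') := skew _ _
    have e5 : g (D Xa Y) (φ ζ') = g (h Xa Y) (φ ζ') := by
      rw [gauss Xa hXa Y hY]
      have hnab : g (nab Xa Y) (φ ζ') = 0 := by
        rw [gsymm]; exact hν_normal _ hφζ' _ (nab_tan Xa hXa Y hY)
      simp only [map_add, LinearMap.add_apply, hnab, zero_add]
    rw [e1, e2]
    simp only [map_add, LinearMap.add_apply, e3, zero_add, e4, e5]
  -- apply it twice
  have hφζ : φ ζ ∈ ν := hν_inv ζ hζ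
  have A : g (h (φ X) (φ X)) ζ = - g (h (φ X) X) (φ ζ) :=
    star (φ X) hφXT X hXT hφXT ζ hζ
  have B : g (h X (φ X)) (φ ζ) = - g (h X X) (φ (φ ζ)) :=
    star X hXT X hXT hφXT (φ ζ) hφζ
  have C : g (h X X) (φ (φ ζ)) = - g (h X X) ζ := by
    rw [acs1]
    simp only [map_add, map_neg, map_smul, LinearMap.add_apply, LinearMap.neg_apply,
      LinearMap.smul_apply, smul_eq_mul, gζξ]
    ring
  rw [hsymm (φ X) hφXT X hXT] at A
  rw [A, B, C]
  ring
end

section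
/- Let $M^n = N_T \times_f N_\perp$ be a contact CR-warped product submanifold of a Sasakian manifold $\tilde M^{2l+1}$ with $\xi$ tangent to $N_T$, and let $\zeta$ be a section of the maximal $\phi$-invariant subbundle $\nu$ of the normal bundle. Then for every $X$ tangent to $N_T$ orthogonal to $\xi$, $g(h(\phi X, X), \phi\zeta) = g(h(X,X), \zeta)$ and $g(h(\phi X, \phi X), \zeta) = -\,g(h(X, \phi X), \phi\zeta)$. -/
/-!
STATEMENT 4.  Formalization of: for a contact CR-warped product submanifold
`Mⁿ = N_T ×_f N_⊥` of a Sasakian manifold `M̃^{2l+1}` with `ξ` tangent to `N_T`, and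
`ζ` a section of the maximal `φ`-invariant subbundle `ν` of the normal bundle,
for every `X` tangent to `N_T` and orthogonal to `ξ` (i.e. `X ∈ 𝒟_T`):
`g(h(φX, X), φζ) = g(h(X,X), ζ)`  and  `g(h(φX, φX), ζ) = -g(h(X, φX), φζ)`.

The setting is encoded algebraically exactly as in the other contact statements:
`V` is the module of ambient vector fields along `Mⁿ` with Riemannian metric `g`,
`T ⊆ V` the tangent distribution of the contact CR-submanifold `Mⁿ`, with
`T = 𝒟_T ⊕ 𝒟_⊥ ⊕ ⟨ξ⟩`, `𝒟_T` invariant, `𝒟_⊥` anti-invariant, the summands mutually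
orthogonal; `N_T` is the integral manifold of `𝒟_T ⊕ ⟨ξ⟩` and `N_⊥` of `𝒟_⊥`;
`D`, `nab`, `h` are the ambient connection, the induced connection and the second
fundamental form (Gauss formula), `Dphi X Y = (∇̃_X φ)Y`, and the Sasakian condition
holds.  `ν` is a `φ`-invariant subbundle of the normal bundle.
-/
theorem statement4
    (V : Type*) [AddCommGroup V] [Module ℝ V]
    (g : V →ₗ[ℝ] V →ₗ[ℝ] ℝ)
    (gsymm : ∀ u v, g u v = g v u)
    (gpos : ∀ v, v ≠ 0 → 0 < g v v)
    (T : Submodule ℝ V)                 -- tangent distribution of Mⁿ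
    (φ : V →ₗ[ℝ] V) (ξ : V)
    (hξT : ξ ∈ T)
    -- almost contact metric structure
    (acs1 : ∀ X, φ (φ X) = -X + (g X ξ) • ξ)
    (acs2 : φ ξ = 0)
    (acs3 : ∀ X, g (φ X) ξ = 0)
    (acs4 : g ξ ξ = 1)
    (acs5 : ∀ X Y, g (φ X) (φ Y) = g X Y - g X ξ * g Y ξ)
    -- contact CR-structure:  T Mⁿ = 𝒟_T ⊕ 𝒟_⊥ ⊕ ⟨ξ⟩
    (DT Dperp : Submodule ℝ V)
    (hdecomp : DT ⊔ Dperp ⊔ Submodule.span ℝ ({ξ} : Set V) = T)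
    (hDTinv : ∀ X ∈ DT, φ X ∈ DT)                    -- 𝒟_T is invariant
    (hDperpanti : ∀ Z ∈ Dperp, ∀ U ∈ T, g (φ Z) U = 0) -- 𝒟_⊥ is anti-invariant
    (horth1 : ∀ X ∈ DT, ∀ Z ∈ Dperp, g X Z = 0)
    (horth2 : ∀ X ∈ DT, g X ξ = 0)
    (horth3 : ∀ Z ∈ Dperp, g Z ξ = 0)
    -- Gauss formula
    (D : V → V → V) (nab : V → V → V) (h : V → V → V)
    (gauss : ∀ X ∈ T, ∀ Y ∈ T, D X Y = nab X Y + h X Y)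
    (nab_tan : ∀ X ∈ T, ∀ Y ∈ T, nab X Y ∈ T)
    (h_normal : ∀ X ∈ T, ∀ Y ∈ T, ∀ Z ∈ T, g (h X Y) Z = 0)
    (hsymm : ∀ X ∈ T, ∀ Y ∈ T, h X Y = h Y X)
    -- covariant derivative of φ and the Sasakian condition
    (Dphi : V → V → V)
    (leibniz : ∀ X Y, Dphi X Y = D X (φ Y) - φ (D X Y))
    (sasakian : ∀ X Y, Dphi X Y = -(g X Y) • ξ + (g Y ξ) • X)
    -- ν : the maximal φ-invariant subbundle of the normal bundle
    (ν : Submodule ℝ V)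
    (hν_normal : ∀ ζ ∈ ν, ∀ U ∈ T, g ζ U = 0)
    (hν_inv : ∀ ζ ∈ ν, φ ζ ∈ ν) :
    ∀ X ∈ DT, ∀ ζ ∈ ν,
      g (h (φ X) X) (φ ζ) = g (h X X) ζ
      ∧ g (h (φ X) (φ X)) ζ = - g (h X (φ X)) (φ ζ) := by
  intro X hX ζ hζ
  have hXT : X ∈ T := by
    rw [← hdecomp]; exact Submodule.mem_sup_left (Submodule.mem_sup_left hX)
  have hφXT : φ X ∈ T := by
    rw [← hdecomp]
    exact Submodule.mem_sup_left (Submodule.mem_sup_left (hDTinv X hX))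
  have hφζ : φ ζ ∈ ν := hν_inv ζ hζ
  have skew : ∀ u v, g (φ u) v = - g u (φ v) := by
    intro u v
    have h1 := acs5 u (φ v)
    rw [acs1 v] at h1
    simp only [map_add, map_neg, map_smul, smul_eq_mul, acs3, LinearMap.add_apply,
      LinearMap.neg_apply, LinearMap.smul_apply, mul_zero, sub_zero] at h1
    linarith
  have gζξ : g ζ ξ = 0 := hν_normal ζ hζ ξ hξT
  have gXξ : g X ξ = 0 := horth2 X hX
  have gφXX : g (φ X) X = 0 := by
    have h1 := skew X X
    have h2 := gsymm X (φ X)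
    linarith
  have gξφζ : g ξ (φ ζ) = 0 := by rw [gsymm]; exact hν_normal (φ ζ) hφζ ξ hξT
  have hXφζ : g X (φ ζ) = 0 := by rw [gsymm]; exact hν_normal (φ ζ) hφζ X hXT
  -- helper: g (D W Y) η = g (h W Y) η for normal η ∈ ν
  have gD : ∀ W ∈ T, ∀ Y ∈ T, ∀ η ∈ ν, g (D W Y) η = g (h W Y) η := by
    intro W hW Y hY η hη
    rw [gauss W hW Y hY, map_add, LinearMap.add_apply]
    have : g (nab W Y) η = 0 := by
      rw [gsymm]; exact hν_normal η hη _ (nab_tan W hW Y hY)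
    rw [this, zero_add]
  -- Lemma B instance: g (h X (φ X)) (φ ζ) = g (h X X) ζ
  have lemB : g (h X (φ X)) (φ ζ) = g (h X X) ζ := by
    have e1 : D X (φ X) = Dphi X X + φ (D X X) := by
      have := leibniz X X; rw [this]; abel
    have e2 : g (Dphi X X) (φ ζ) = 0 := by
      rw [sasakian X X, map_add, LinearMap.add_apply]
      simp [map_smul, LinearMap.smul_apply, smul_eq_mul, gξφζ, hXφζ]
    have e3 : g (φ (D X X)) (φ ζ) = g (h X X) ζ := by
      rw [acs5, gζξ, mul_zero, sub_zero, gD X hXT X hXT ζ hζ]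
    calc g (h X (φ X)) (φ ζ) = g (D X (φ X)) (φ ζ) := (gD X hXT (φ X) hφXT (φ ζ) hφζ).symm
      _ = g (Dphi X X) (φ ζ) + g (φ (D X X)) (φ ζ) := by
          rw [e1, map_add, LinearMap.add_apply]
      _ = g (h X X) ζ := by rw [e2, e3, zero_add]
  -- Lemma A instance: g (h (φ X) X) (φ ζ) = - g (h (φ X) (φ X)) ζ
  have lemA : g (h (φ X) X) (φ ζ) = - g (h (φ X) (φ X)) ζ := by
    have e0 : Dphi (φ X) X = 0 := by
      rw [sasakian (φ X) X, gφXX, gXξ]; simp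
    have e1 : φ (D (φ X) X) = D (φ X) (φ X) := by
      have h0 := leibniz (φ X) X
      rw [e0] at h0
      exact (sub_eq_zero.mp h0.symm).symm
    calc g (h (φ X) X) (φ ζ) = g (D (φ X) X) (φ ζ) := (gD (φ X) hφXT X hXT (φ ζ) hφζ).symm
      _ = - g (φ (D (φ X) X)) ζ := by
          have := skew (D (φ X) X) ζ; linarith
      _ = - g (D (φ X) (φ X)) ζ := by rw [e1]
      _ = - g (h (φ X) (φ X)) ζ := by rw [gD (φ X) hφXT (φ X) hφXT ζ hζ]
  constructor
  · rw [hsymm (φ X) hφXT X hXT, lemB]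
  · rw [hsymm X hXT (φ X) hφXT, lemA]; ring
end

section
/- Let $\varphi$ be a $\mathcal{D}_2$-minimal isometric immersion of a warped product submanifold $M^n = N_1 \times_f N_2$ into a Riemannian manifold $\tilde M^m$ (i.e., the partial mean curvature vector $\vec H_2 = \frac{1}{n_2}\sum_{A=n_1+1}^{n} h(e_A, e_A)$ over an orthonormal frame of $\mathcal{D}_2$ vanishes). If $N_2$ is totally umbilical in $\tilde M^m$, then $\varphi$ is $\mathcal{D}_2$-totally geodesic, i.e., $h(Z,W) = 0$ for all $Z, W$ tangent to $N_2$. -/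
/-!
STATEMENT 7.  Formalization of Lemma: if `φ` is a `𝒟₂`-minimal isometric immersion of a
warped product submanifold `Mⁿ = N₁ ×_f N₂` into a Riemannian manifold `M̃ᵐ` and `N₂` is
totally umbilical in `M̃ᵐ`, then `φ` is `𝒟₂`-totally geodesic: `h(Z,W) = 0` for all
`Z, W` tangent to `N₂`.

The setting is encoded algebraically: `V` is the module of ambient vector fields along
`Mⁿ` with Riemannian metric `g`, `D₂ ⊆ V` the fiber distribution (fields tangent to
`N₂`), `e : Fin n₂ → V` an orthonormal frame of `𝒟₂`.  `h`, `hhat` and `hcheck` are the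
(bilinear, symmetric) second fundamental forms of `Mⁿ` in `M̃ᵐ`, of `N₂` in `M̃ᵐ` and of
`N₂` in `Mⁿ`, related by `h(Z,W) = ĥ(Z,W) - ȟ(Z,W)` on `𝒟₂ × 𝒟₂`.  Since the fibers of
a warped product are totally umbilical in `Mⁿ`, `ȟ(Z,W) = -(g(Z,W)/f)∇f` where `f > 0`
is the warping function and `gradf` its gradient.  `N₂` is totally umbilical in `M̃ᵐ`:
`ĥ(Z,W) = g(Z,W)Ĥ` with `Ĥ` its mean curvature vector.  `𝒟₂`-minimality of `φ` reads
`∑_A h(e_A, e_A) = 0`.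
-/
theorem statement7
    (V : Type*) [AddCommGroup V] [Module ℝ V]
    (g : V →ₗ[ℝ] V →ₗ[ℝ] ℝ)
    (gsymm : ∀ u v, g u v = g v u)
    (gpos : ∀ v, v ≠ 0 → 0 < g v v)
    (D₂ : Submodule ℝ V)                      -- the fiber distribution 𝒟₂ (tangent to N₂)
    -- an orthonormal frame of 𝒟₂ ; n₂ = dim N₂ ≥ 1
    (n₂ : ℕ) (hn₂ : 0 < n₂) (e : Fin n₂ → V)
    (he_mem : ∀ A, e A ∈ D₂)
    (he_on : ∀ A B, g (e A) (e B) = if A = B then 1 else 0)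
    (he_span : Submodule.span ℝ (Set.range e) = D₂)
    -- second fundamental forms: h of Mⁿ in M̃ᵐ, ĥ of N₂ in M̃ᵐ, ȟ of N₂ in Mⁿ
    (h hhat hcheck : V →ₗ[ℝ] V →ₗ[ℝ] V)
    (hsymm : ∀ Z ∈ D₂, ∀ W ∈ D₂, h Z W = h W Z)
    (hrel : ∀ Z ∈ D₂, ∀ W ∈ D₂, h Z W = hhat Z W - hcheck Z W)
    -- warping function and its gradient: fibers are totally umbilical in Mⁿ with
    -- ȟ(Z,W) = -(g(Z,W)/f)∇f
    (f : ℝ) (hf : 0 < f) (gradf : V)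
    (hcheck_umb : ∀ Z ∈ D₂, ∀ W ∈ D₂, hcheck Z W = -((g Z W) / f) • gradf)
    -- N₂ is totally umbilical in M̃ᵐ
    (Hhat : V)
    (humb : ∀ Z ∈ D₂, ∀ W ∈ D₂, hhat Z W = (g Z W) • Hhat)
    -- φ is 𝒟₂-minimal
    (hmin : (∑ A, h (e A) (e A)) = 0) :
    ∀ Z ∈ D₂, ∀ W ∈ D₂, h Z W = 0 := by
  set c : V := Hhat + (1 / f) • gradf with hc
  have key : ∀ Z ∈ D₂, ∀ W ∈ D₂, h Z W = g Z W • c := by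
    intro Z hZ W hW
    rw [hrel Z hZ W hW, humb Z hZ W hW, hcheck_umb Z hZ W hW, hc,
      smul_add, smul_smul]
    rw [sub_eq_add_neg, neg_smul, neg_neg, div_eq_mul_one_div]
  have hsum : (∑ A, h (e A) (e A)) = (n₂ : ℝ) • c := by
    have : ∀ A : Fin n₂, h (e A) (e A) = c := by
      intro A
      rw [key (e A) (he_mem A) (e A) (he_mem A), he_on A A, if_pos rfl, one_smul]
    simp only [this, Finset.sum_const, Finset.card_univ, Fintype.card_fin]
    exact (Nat.cast_smul_eq_nsmul ℝ n₂ c).symm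
  have hc0 : c = 0 := by
    rw [hsum] at hmin
    rcases smul_eq_zero.mp hmin with h1 | h2
    · exact absurd h1 (by positivity)
    · exact h2
  intro Z hZ W hW
  rw [key Z hZ W hW, hc0, smul_zero]
end

section
/- In the setting of a $\mathcal{D}_T$-minimal warped product CR-submanifold $M^n = N_T \times_f N_\perp$ of a Kähler manifold, equality in $\tfrac{1}{2}\|h\|^2 \ge \tilde\tau(T_x M^n) - \tilde\tau(T_x N_T) - \tilde\tau(T_x N_\perp) - \frac{n_2\Delta f}{f}$ holds identically if and only if $h(\mathcal{D}_T, \mathcal{D}_T) = 0$ and $h(\mathcal{D}_\perp, \mathcal{D}_\perp) = 0$, i.e., the second fundamental form vanishes on both pairs of tangent vectors from $\mathcal{D}_T$ and pairs from $\mathcal{D}_\perp$. -/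
/-!
STATEMENT 13.  Formalization of the equality case of the main inequality for a
`𝒟_T`-minimal warped product CR-submanifold `Mⁿ = N_T ×_f N_⊥` of a Kähler manifold.
The data is given at every point `x : X` of `Mⁿ` via an adapted orthonormal frame:
`e₁, …, e_{n₁}` tangent to `N_T` (spanning `𝒟_T`), `e_{n₁+1}, …, e_{n₁+n₂}` tangent to
`N_⊥` (spanning `𝒟_⊥`), and `p` normal directions.  `hc x r i j = h^r_{ij}(x)` are the
coefficients of the second fundamental form, `K`/`Ktilde` the intrinsic/ambient
sectional curvatures (Gauss equation `gauss`), `τtM`, `τtT`, `τtP` the ambient scalar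
curvatures restricted to `T_xMⁿ`, `T_xN_T`, `T_xN_⊥`, `hsq x = ‖h‖²(x)`, `f > 0` the
warping function and `lapf` its Laplacian (`hmix` is the warped-product relation).
Conclusion: equality `½‖h‖² = τ̃(T_xMⁿ) - τ̃(T_xN_T) - τ̃(T_xN_⊥) - n₂ Δf / f` holds
identically if and only if `h(𝒟_T, 𝒟_T) = 0` and `h(𝒟_⊥, 𝒟_⊥) = 0`.
-/

private lemma aux_swap {p n : ℕ} (g : Fin p → Fin n → Fin n → ℝ) :
    ∑ i : Fin n, ∑ j : Fin n, ∑ r : Fin p, g r i j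
      = ∑ r : Fin p, ∑ i : Fin n, ∑ j : Fin n, g r i j := by
  calc ∑ i : Fin n, ∑ j : Fin n, ∑ r : Fin p, g r i j
      = ∑ i : Fin n, ∑ r : Fin p, ∑ j : Fin n, g r i j :=
        Finset.sum_congr rfl fun i _ => Finset.sum_comm
    _ = ∑ r : Fin p, ∑ i : Fin n, ∑ j : Fin n, g r i j := Finset.sum_comm

private lemma aux_zero {p n : ℕ} (c : Fin n → Fin n → Prop) [∀ i j, Decidable (c i j)]
    (g : Fin p → Fin n → Fin n → ℝ)
    (h : ∑ i, ∑ j, (if c i j then ∑ r, (g r i j) ^ 2 else 0) = 0)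
    {i : Fin n} {j : Fin n} (hcij : c i j) (r : Fin p) : g r i j = 0 := by
  have hnn : ∀ a b : Fin n, 0 ≤ (if c a b then ∑ r, (g r a b) ^ 2 else 0) := by
    intro a b; split_ifs
    · exact Finset.sum_nonneg fun r _ => sq_nonneg _
    · exact le_refl _
  have h1 := (Finset.sum_eq_zero_iff_of_nonneg
      (fun a _ => Finset.sum_nonneg fun b _ => hnn a b)).mp h i (Finset.mem_univ i)
  have h2 := (Finset.sum_eq_zero_iff_of_nonneg (fun b _ => hnn i b)).mp h1 j (Finset.mem_univ j)
  rw [if_pos hcij] at h2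
  have h3 := (Finset.sum_eq_zero_iff_of_nonneg
      (fun r _ => sq_nonneg (g r i j))).mp h2 r (Finset.mem_univ r)
  exact pow_eq_zero_iff two_ne_zero |>.mp h3

theorem statement13
    (X : Type*) -- the points of Mⁿ
    (n₁ n₂ p : ℕ) (hn₁ : 0 < n₁) (hn₂ : 0 < n₂)
    (hc : X → Fin p → Fin (n₁ + n₂) → Fin (n₁ + n₂) → ℝ)
    (hsymm : ∀ x r i j, hc x r i j = hc x r j i)
    (K Ktilde : X → Fin (n₁ + n₂) → Fin (n₁ + n₂) → ℝ)
    -- Gauss equation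
    (gauss : ∀ x i j, i ≠ j →
      K x i j = Ktilde x i j + ∑ r, (hc x r i i * hc x r j j - (hc x r i j) ^ 2))
    (f lapf : X → ℝ) (hf : ∀ x, 0 < f x)
    -- the warped-product relation at every point
    (hmix : ∀ x, (∑ i : Fin (n₁ + n₂), ∑ j : Fin (n₁ + n₂),
        if (i : ℕ) < n₁ ∧ n₁ ≤ (j : ℕ) then K x i j else 0) = n₂ * lapf x / f x)
    -- ambient scalar curvatures restricted to T_xMⁿ, T_xN_T, T_xN_⊥
    (τtM τtT τtP : X → ℝ)
    (hτtM : ∀ x, τtM x = ∑ i, ∑ j, if i < j then Ktilde x i j else 0)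
    (hτtT : ∀ x, τtT x = ∑ i : Fin (n₁ + n₂), ∑ j : Fin (n₁ + n₂),
        if (i : ℕ) < n₁ ∧ (j : ℕ) < n₁ ∧ i < j then Ktilde x i j else 0)
    (hτtP : ∀ x, τtP x = ∑ i : Fin (n₁ + n₂), ∑ j : Fin (n₁ + n₂),
        if n₁ ≤ (i : ℕ) ∧ n₁ ≤ (j : ℕ) ∧ i < j then Ktilde x i j else 0)
    -- 𝒟_T-minimality
    (DTmin : ∀ x r, (∑ i : Fin (n₁ + n₂), if (i : ℕ) < n₁ then hc x r i i else 0) = 0)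
    -- squared norm of the second fundamental form
    (hsq : X → ℝ) (hhsq : ∀ x, hsq x = ∑ r, ∑ i, ∑ j, (hc x r i j) ^ 2) :
    (∀ x, (1 / 2) * hsq x = τtM x - τtT x - τtP x - n₂ * lapf x / f x)
      ↔ ((∀ x r (i j : Fin (n₁ + n₂)), (i : ℕ) < n₁ → (j : ℕ) < n₁ → hc x r i j = 0)      -- h(𝒟_T, 𝒟_T) = 0
        ∧ (∀ x r (i j : Fin (n₁ + n₂)), n₁ ≤ (i : ℕ) → n₁ ≤ (j : ℕ) → hc x r i j = 0)) := by  -- h(𝒟_⊥, 𝒟_⊥) = 0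
    classical
  -- mixed sum of squares
  have key : ∀ x, τtM x - τtT x - τtP x - n₂ * lapf x / f x
      = ∑ i : Fin (n₁ + n₂), ∑ j : Fin (n₁ + n₂),
          (if (i : ℕ) < n₁ ∧ n₁ ≤ (j : ℕ) then ∑ r, (hc x r i j) ^ 2 else 0) := by
    intro x
    have hsum : (∑ i : Fin (n₁ + n₂), ∑ j : Fin (n₁ + n₂), if i < j then Ktilde x i j else 0)
        = (∑ i : Fin (n₁ + n₂), ∑ j : Fin (n₁ + n₂),
            if (i : ℕ) < n₁ ∧ (j : ℕ) < n₁ ∧ i < j then Ktilde x i j else 0)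
          + (∑ i : Fin (n₁ + n₂), ∑ j : Fin (n₁ + n₂),
            if n₁ ≤ (i : ℕ) ∧ n₁ ≤ (j : ℕ) ∧ i < j then Ktilde x i j else 0)
          + (∑ i : Fin (n₁ + n₂), ∑ j : Fin (n₁ + n₂),
            if (i : ℕ) < n₁ ∧ n₁ ≤ (j : ℕ) then Ktilde x i j else 0) := by
      simp only [← Finset.sum_add_distrib]
      refine Finset.sum_congr rfl fun i _ => Finset.sum_congr rfl fun j _ => ?_
      simp only [Fin.lt_def]
      split_ifs <;> first | ring1 | (exfalso; omega)
    have hKmix : (∑ i : Fin (n₁ + n₂), ∑ j : Fin (n₁ + n₂),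
          if (i : ℕ) < n₁ ∧ n₁ ≤ (j : ℕ) then K x i j else 0)
        = (∑ i : Fin (n₁ + n₂), ∑ j : Fin (n₁ + n₂),
            if (i : ℕ) < n₁ ∧ n₁ ≤ (j : ℕ) then Ktilde x i j else 0)
          + ((∑ i : Fin (n₁ + n₂), ∑ j : Fin (n₁ + n₂),
              if (i : ℕ) < n₁ ∧ n₁ ≤ (j : ℕ) then ∑ r, hc x r i i * hc x r j j else 0)
            - (∑ i : Fin (n₁ + n₂), ∑ j : Fin (n₁ + n₂),
              if (i : ℕ) < n₁ ∧ n₁ ≤ (j : ℕ) then ∑ r, (hc x r i j) ^ 2 else 0)) := by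
      simp only [← Finset.sum_sub_distrib, ← Finset.sum_add_distrib]
      refine Finset.sum_congr rfl fun i _ => Finset.sum_congr rfl fun j _ => ?_
      by_cases hcnd : (i : ℕ) < n₁ ∧ n₁ ≤ (j : ℕ)
      · have hne : i ≠ j := by
          intro h; rw [h] at hcnd; omega
        simp only [if_pos hcnd]
        rw [gauss x i j hne, Finset.sum_sub_distrib]
      · simp [hcnd]
    have hprod : (∑ i : Fin (n₁ + n₂), ∑ j : Fin (n₁ + n₂),
          if (i : ℕ) < n₁ ∧ n₁ ≤ (j : ℕ) then ∑ r, hc x r i i * hc x r j j else 0) = 0 := by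
      have hterm : ∀ i j : Fin (n₁ + n₂),
          (if (i : ℕ) < n₁ ∧ n₁ ≤ (j : ℕ) then ∑ r, hc x r i i * hc x r j j else 0)
            = ∑ r, (if (i : ℕ) < n₁ then hc x r i i else 0)
                * (if n₁ ≤ (j : ℕ) then hc x r j j else 0) := by
        intro i j
        by_cases hp : (i : ℕ) < n₁ <;> by_cases hq : n₁ ≤ (j : ℕ) <;> simp [hp, hq]
      simp only [hterm]
      rw [aux_swap (fun r i j => (if (i : ℕ) < n₁ then hc x r i i else 0)
        * (if n₁ ≤ (j : ℕ) then hc x r j j else 0))]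
      refine Finset.sum_eq_zero fun r _ => ?_
      rw [← Finset.sum_mul_sum, DTmin x r, zero_mul]
    have hmx := hmix x
    have h1 : τtM x = τtT x + τtP x
        + ∑ i : Fin (n₁ + n₂), ∑ j : Fin (n₁ + n₂),
            (if (i : ℕ) < n₁ ∧ n₁ ≤ (j : ℕ) then Ktilde x i j else 0) := by
      rw [hτtM, hτtT, hτtP]; exact hsum
    rw [hKmix, hprod] at hmx
    linarith [h1, hmx]
  -- decomposition of ‖h‖²
  have hsqeq : ∀ x, hsq x
      = (∑ i : Fin (n₁ + n₂), ∑ j : Fin (n₁ + n₂),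
          (if (i : ℕ) < n₁ ∧ (j : ℕ) < n₁ then ∑ r, (hc x r i j) ^ 2 else 0))
      + (∑ i : Fin (n₁ + n₂), ∑ j : Fin (n₁ + n₂),
          (if n₁ ≤ (i : ℕ) ∧ n₁ ≤ (j : ℕ) then ∑ r, (hc x r i j) ^ 2 else 0))
      + 2 * (∑ i : Fin (n₁ + n₂), ∑ j : Fin (n₁ + n₂),
          (if (i : ℕ) < n₁ ∧ n₁ ≤ (j : ℕ) then ∑ r, (hc x r i j) ^ 2 else 0)) := by
    intro x
    have hPT : (∑ i : Fin (n₁ + n₂), ∑ j : Fin (n₁ + n₂),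
          (if n₁ ≤ (i : ℕ) ∧ (j : ℕ) < n₁ then ∑ r, (hc x r i j) ^ 2 else 0))
        = ∑ i : Fin (n₁ + n₂), ∑ j : Fin (n₁ + n₂),
            (if (i : ℕ) < n₁ ∧ n₁ ≤ (j : ℕ) then ∑ r, (hc x r i j) ^ 2 else 0) := by
      rw [Finset.sum_comm]
      refine Finset.sum_congr rfl fun i _ => Finset.sum_congr rfl fun j _ => ?_
      by_cases hcnd : (i : ℕ) < n₁ ∧ n₁ ≤ (j : ℕ)
      · rw [if_pos ⟨hcnd.2, hcnd.1⟩, if_pos hcnd]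
        exact Finset.sum_congr rfl fun r _ => by rw [hsymm x r j i]
      · rw [if_neg (fun h => hcnd ⟨h.2, h.1⟩), if_neg hcnd]
    have hfour : hsq x
        = (∑ i : Fin (n₁ + n₂), ∑ j : Fin (n₁ + n₂),
            (if (i : ℕ) < n₁ ∧ (j : ℕ) < n₁ then ∑ r, (hc x r i j) ^ 2 else 0))
        + (∑ i : Fin (n₁ + n₂), ∑ j : Fin (n₁ + n₂),
            (if n₁ ≤ (i : ℕ) ∧ n₁ ≤ (j : ℕ) then ∑ r, (hc x r i j) ^ 2 else 0))
        + (∑ i : Fin (n₁ + n₂), ∑ j : Fin (n₁ + n₂),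
            (if (i : ℕ) < n₁ ∧ n₁ ≤ (j : ℕ) then ∑ r, (hc x r i j) ^ 2 else 0))
        + (∑ i : Fin (n₁ + n₂), ∑ j : Fin (n₁ + n₂),
            (if n₁ ≤ (i : ℕ) ∧ (j : ℕ) < n₁ then ∑ r, (hc x r i j) ^ 2 else 0)) := by
      rw [hhsq, ← aux_swap (fun r i j => (hc x r i j) ^ 2)]
      simp only [← Finset.sum_add_distrib]
      refine Finset.sum_congr rfl fun i _ => Finset.sum_congr rfl fun j _ => ?_
      split_ifs <;> first | ring1 | (exfalso; omega)
    rw [hfour, hPT]; ring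
  constructor
  · rintro heq
    have hz : ∀ x,
        (∑ i : Fin (n₁ + n₂), ∑ j : Fin (n₁ + n₂),
          (if (i : ℕ) < n₁ ∧ (j : ℕ) < n₁ then ∑ r, (hc x r i j) ^ 2 else 0))
        + (∑ i : Fin (n₁ + n₂), ∑ j : Fin (n₁ + n₂),
          (if n₁ ≤ (i : ℕ) ∧ n₁ ≤ (j : ℕ) then ∑ r, (hc x r i j) ^ 2 else 0)) = 0 := by
      intro x
      have h1 := heq x
      rw [key x] at h1
      rw [hsqeq x] at h1
      linarith
    have hnn : ∀ x (c : Fin (n₁ + n₂) → Fin (n₁ + n₂) → Prop) [∀ i j, Decidable (c i j)],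
        0 ≤ ∑ i : Fin (n₁ + n₂), ∑ j : Fin (n₁ + n₂),
          (if c i j then ∑ r, (hc x r i j) ^ 2 else 0) := by
      intro x c _
      refine Finset.sum_nonneg fun i _ => Finset.sum_nonneg fun j _ => ?_
      split_ifs
      · exact Finset.sum_nonneg fun r _ => sq_nonneg _
      · exact le_refl _
    constructor
    · intro x r i j hi hj
      have hTT : (∑ i : Fin (n₁ + n₂), ∑ j : Fin (n₁ + n₂),
          (if (i : ℕ) < n₁ ∧ (j : ℕ) < n₁ then ∑ r, (hc x r i j) ^ 2 else 0)) = 0 := by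
        have := hz x
        have h1 := hnn x (fun i j => (i : ℕ) < n₁ ∧ (j : ℕ) < n₁)
        have h2 := hnn x (fun i j => n₁ ≤ (i : ℕ) ∧ n₁ ≤ (j : ℕ))
        linarith
      exact aux_zero _ (fun r i j => hc x r i j) hTT ⟨hi, hj⟩ r
    · intro x r i j hi hj
      have hPP : (∑ i : Fin (n₁ + n₂), ∑ j : Fin (n₁ + n₂),
          (if n₁ ≤ (i : ℕ) ∧ n₁ ≤ (j : ℕ) then ∑ r, (hc x r i j) ^ 2 else 0)) = 0 := by
        have := hz x
        have h1 := hnn x (fun i j => (i : ℕ) < n₁ ∧ (j : ℕ) < n₁)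
        have h2 := hnn x (fun i j => n₁ ≤ (i : ℕ) ∧ n₁ ≤ (j : ℕ))
        linarith
      exact aux_zero _ (fun r i j => hc x r i j) hPP ⟨hi, hj⟩ r
  · rintro ⟨hT, hP⟩ x
    have hTT : (∑ i : Fin (n₁ + n₂), ∑ j : Fin (n₁ + n₂),
        (if (i : ℕ) < n₁ ∧ (j : ℕ) < n₁ then ∑ r, (hc x r i j) ^ 2 else 0)) = 0 := by
      refine Finset.sum_eq_zero fun i _ => Finset.sum_eq_zero fun j _ => ?_
      split_ifs with hcij
      · exact Finset.sum_eq_zero fun r _ => by rw [hT x r i j hcij.1 hcij.2]; ring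
      · rfl
    have hPP : (∑ i : Fin (n₁ + n₂), ∑ j : Fin (n₁ + n₂),
        (if n₁ ≤ (i : ℕ) ∧ n₁ ≤ (j : ℕ) then ∑ r, (hc x r i j) ^ 2 else 0)) = 0 := by
      refine Finset.sum_eq_zero fun i _ => Finset.sum_eq_zero fun j _ => ?_
      split_ifs with hcij
      · exact Finset.sum_eq_zero fun r _ => by rw [hP x r i j hcij.1 hcij.2]; ring
      · rfl
    rw [hsqeq x, hTT, hPP, key x]
    ring
end
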